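/- Let n > 1 and d > 1 be given. Then there exists λ_{d,n} > 0 and a packing of n unit balls in E^d with centers ĉ_1, …, ĉ_n which has the largest contact number among all packings of n unit balls in E^d (i.e., for every packing c_1, …, c_n of n unit balls in E^d, the number of pairs j < k with ‖c_j − c_k‖ = 2 is at most the number of pairs j < k with ‖ĉ_j − ĉ_k‖ = 2), such that for every λ with 0 < λ < λ_{d,n} and every packing c_1, …, c_n of n unit balls in E^d, one has vol_d(⋃_{i=1}^n (c_i + (1+λ)B^d)) ≥ vol_d(⋃_{i=1}^n (ĉ_i + (1+λ)B^d)). -/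

import Mathlib

/-!
Let `K` be the largest contact number of a packing of `n` unit balls, attained by `ĉ`. By
compactness (after translating far-apart clusters of a packing next to each other) there is an
`ε > 0` such that no packing has more than `K` pairs of centers at distance at most `2 + ε`.
For `1 + λ < 2 / √3` no point lies in three of the enlarged balls, so by inclusion–exclusion
the volume of the outer parallel domain is `n vol((1 + λ) B^d)` minus the total volume of the
pairwise lenses. The volume of a lens depends only on the distance of its centers, does not
increase with it, and vanishes beyond `2 + 2λ`; so for `λ ≤ ε / 2` the total lens volume of any
packing is at most `K` times the lens volume at distance `2`, which is at most that of `ĉ`.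
-/

open MeasureTheory Metric

/-- The contact number of a packing with centers `c`: the number of pairs `j < k` with
`‖c j - c k‖ = 2`. -/
noncomputable def contactNumber {d n : ℕ} (c : Fin n → EuclideanSpace ℝ (Fin d)) : ℕ :=
  {p : Fin n × Fin n | p.1 < p.2 ∧ ‖c p.1 - c p.2‖ = 2}.ncard

open Finset Filter Topology
open scoped ENNReal

namespace UnitBallPacking

variable {E : Type*} {n : ℕ}

section Seminormed

variable [SeminormedAddCommGroup E]

def IsPacking (c : Fin n → E) : Prop :=
  ∀ j k : Fin n, j ≠ k → 2 ≤ ‖c j - c k‖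

noncomputable def nearPairs (t : ℝ) (c : Fin n → E) : Finset (Fin n × Fin n) :=
  {p | p.1 < p.2 ∧ ‖c p.1 - c p.2‖ ≤ t}

def nearGraph (t : ℝ) (c : Fin n → E) : SimpleGraph (Fin n) where
  Adj j k := j ≠ k ∧ ‖c j - c k‖ ≤ t
  symm := ⟨fun _ _ h => ⟨h.1.symm, norm_sub_rev (c _) (c _) ▸ h.2⟩⟩
  loopless := ⟨fun _ h => h.1 rfl⟩

variable {c : Fin n → E} {t : ℝ}

theorem mem_nearPairs {p : Fin n × Fin n} :
    p ∈ nearPairs t c ↔ p.1 < p.2 ∧ ‖c p.1 - c p.2‖ ≤ t := by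
  simp [nearPairs]

theorem nearPairs_subset (t : ℝ) (c : Fin n → E) :
    nearPairs t c ⊆ ({p | p.1 < p.2} : Finset (Fin n × Fin n)) :=
  fun _ hp => mem_filter.2 ⟨mem_univ _, (mem_nearPairs.1 hp).1⟩

theorem IsPacking.two_le_dist (hc : IsPacking c) {j k : Fin n} (h : j ≠ k) :
    2 ≤ dist (c j) (c k) :=
  dist_eq_norm (c j) (c k) ▸ hc j k h

theorem isClosed_setOf_isPacking : IsClosed {c : Fin n → E | IsPacking c} := by
  simp only [IsPacking, Set.ofPred_forall]
  refine isClosed_iInter fun j => isClosed_iInter fun k => isClosed_iInter fun _ => ?_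
  exact isClosed_le continuous_const (by fun_prop)

theorem eventually_nearPairs_add_subset {ι : Type*} {l : Filter ι} {cs : ι → Fin n → E}
    {ε : ι → ℝ} (hcs : Tendsto cs l (𝓝 c)) (hε : Tendsto ε l (𝓝 0)) (t : ℝ) :
    ∀ᶠ x in l, nearPairs (t + ε x) (cs x) ⊆ nearPairs t c := by
  have hpair : ∀ p : Fin n × Fin n,
      ∀ᶠ x in l, p ∈ nearPairs (t + ε x) (cs x) → p ∈ nearPairs t c := by
    intro p
    by_cases hp : ‖c p.1 - c p.2‖ ≤ t
    · exact Eventually.of_forall fun _ hx => mem_nearPairs.2 ⟨(mem_nearPairs.1 hx).1, hp⟩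
    · have hnorm : Tendsto (fun x => ‖cs x p.1 - cs x p.2‖) l (𝓝 ‖c p.1 - c p.2‖) :=
        ((tendsto_pi_nhds.1 hcs p.1).sub (tendsto_pi_nhds.1 hcs p.2)).norm
      have hthr : Tendsto (fun x => t + ε x) l (𝓝 t) := by simpa using hε.const_add t
      filter_upwards [hthr.eventually_lt hnorm (not_le.1 hp)] with x hx hmem
      exact absurd (mem_nearPairs.1 hmem).2 (not_le.2 hx)
  filter_upwards [eventually_all.2 hpair] with x hx p hp using hx p hp

theorem nearGraph_adj {j k : Fin n} :
    (nearGraph t c).Adj j k ↔ j ≠ k ∧ ‖c j - c k‖ ≤ t :=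
  Iff.rfl

theorem norm_sub_le_of_walk {j k : Fin n} (w : (nearGraph t c).Walk j k) :
    ‖c j - c k‖ ≤ t * w.length := by
  induction w with
  | nil => simp
  | @cons x y z hxy _ ih =>
    calc ‖c x - c z‖ ≤ ‖c x - c y‖ + ‖c y - c z‖ := norm_sub_le_norm_sub_add_norm_sub _ _ _
      _ ≤ t + t * _ := add_le_add (nearGraph_adj.1 hxy).2 ih
      _ = _ := by rw [SimpleGraph.Walk.length_cons]; push_cast; ring

theorem norm_sub_le_of_reachable (ht : 0 ≤ t) {j k : Fin n}
    (h : (nearGraph t c).Reachable j k) : ‖c j - c k‖ ≤ t * n := by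
  obtain ⟨w⟩ := h
  calc ‖c j - c k‖ ≤ t * w.bypass.length := norm_sub_le_of_walk w.bypass
    _ ≤ t * n := by
      gcongr
      simpa using w.bypass_isPath.length_lt.le

end Seminormed

section NormedSpace

variable [NormedAddCommGroup E] [NormedSpace ℝ E]

theorem sub_le_norm_add_smul_sub_add_smul {v : E} (hv : ‖v‖ = 1) {x y : E} {s L : ℝ}
    (hx : ‖x‖ ≤ s) (hy : ‖y‖ ≤ s) (hL : 0 ≤ L) {i j : ℕ} (hij : i ≠ j) :
    L - 2 * s ≤ ‖(x + (L * i) • v) - (y + (L * j) • v)‖ := by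
  have hsep : (1 : ℝ) ≤ |(i : ℝ) - j| := by
    exact_mod_cast Int.one_le_abs (sub_ne_zero.2 (Int.natCast_inj.not.2 hij))
  have hslots : L ≤ ‖(L * ((i : ℝ) - j)) • v‖ := by
    rw [norm_smul, hv, mul_one, Real.norm_eq_abs, abs_mul, abs_of_nonneg hL]
    exact le_mul_of_one_le_right hL hsep
  have hdecomp : (x + (L * i) • v) - (y + (L * j) • v) = (L * ((i : ℝ) - j)) • v - (y - x) := by
    rw [mul_sub, sub_smul]
    abel
  rw [hdecomp]
  linarith [norm_sub_norm_le ((L * ((i : ℝ) - j)) • v) (y - x), norm_sub_le y x]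

theorem exists_isPacking [Nontrivial E] (n : ℕ) : ∃ c : Fin n → E, IsPacking c := by
  obtain ⟨v, hv⟩ := exists_norm_eq E zero_le_one
  refine ⟨fun i => (2 * (i : ℕ) : ℝ) • v, fun j k hjk => ?_⟩
  simpa using sub_le_norm_add_smul_sub_add_smul hv (x := 0) (y := 0) norm_zero.le norm_zero.le
    zero_le_two (Fin.val_ne_of_ne hjk)

/-- Each connected component of `nearGraph t c` is translated rigidly to its own slot on a
line. -/
theorem exists_bounded_isPacking [Nontrivial E] (n : ℕ) {t : ℝ} (ht : 0 ≤ t) :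
    ∃ R : ℝ, ∀ c : Fin n → E, IsPacking c → ∃ c' : Fin n → E, IsPacking c' ∧
      (∀ i, ‖c' i‖ ≤ R) ∧ ∀ j k, ‖c j - c k‖ ≤ t → c' j - c' k = c j - c k := by
  obtain ⟨v, hv⟩ := exists_norm_eq E zero_le_one
  -- every cluster lies within `t * n` of its representative, so slots `L` apart keep them apart
  obtain ⟨L, hL⟩ : ∃ L : ℝ, L = 2 * t * n + 2 := ⟨_, rfl⟩
  have hL0 : 0 ≤ L := by rw [hL]; positivity
  refine ⟨t * n + L * n, fun c hc => ?_⟩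
  let G := nearGraph t c
  let rep : Fin n → Fin n := fun i => (G.connectedComponentMk i).out
  have hrep : ∀ i, G.Reachable i (rep i) :=
    fun i => (SimpleGraph.ConnectedComponent.exact (Quot.out_eq _)).symm
  have hnear : ∀ i, ‖c i - c (rep i)‖ ≤ t * n := fun i => norm_sub_le_of_reachable ht (hrep i)
  let c' : Fin n → E := fun i => c i - c (rep i) + (L * (rep i : ℕ)) • v
  have hsame : ∀ j k, rep j = rep k → c' j - c' k = c j - c k := by
    intro j k h
    simp only [c', h]
    abel
  refine ⟨c', fun j k hjk => ?_, fun i => ?_, fun j k hjk => ?_⟩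
  · by_cases h : rep j = rep k
    · rw [hsame j k h]
      exact hc j k hjk
    have hsep := sub_le_norm_add_smul_sub_add_smul hv (hnear j) (hnear k) hL0 (Fin.val_ne_of_ne h)
    exact (by linarith : 2 ≤ L - 2 * (t * n)).trans hsep
  · have hslot : ‖(L * (rep i : ℕ)) • v‖ ≤ L * n := by
      rw [norm_smul, hv, mul_one, Real.norm_eq_abs, abs_of_nonneg (by positivity)]
      gcongr
      exact_mod_cast (rep i).is_lt.le
    exact (norm_add_le _ _).trans (add_le_add (hnear i) hslot)
  · by_cases h : j = k
    · simp [h]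
    exact hsame j k (congrArg Quot.out
      (SimpleGraph.ConnectedComponent.sound (nearGraph_adj.2 ⟨h, hjk⟩).reachable))

theorem exists_isPacking_forall_card_nearPairs_le [Nontrivial E] (n : ℕ) :
    ∃ ĉ : Fin n → E, IsPacking ĉ ∧
      ∀ c : Fin n → E, IsPacking c → (nearPairs 2 c).card ≤ (nearPairs 2 ĉ).card := by
  set S : Set ℕ := (fun c : Fin n → E => (nearPairs 2 c).card) '' {c | IsPacking c}
  obtain ⟨c₀, hc₀⟩ := exists_isPacking (E := E) n
  have hbdd : BddAbove S := ⟨Fintype.card (Fin n × Fin n), by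
    rintro _ ⟨c, _, rfl⟩
    exact card_le_univ _⟩
  obtain ⟨ĉ, hĉ, hmax⟩ := Nat.sSup_mem (s := S) ⟨_, c₀, hc₀, rfl⟩ hbdd
  exact ⟨ĉ, hĉ, fun c hc => (le_csSup hbdd ⟨c, hc, rfl⟩).trans_eq hmax.symm⟩

theorem exists_pos_forall_card_nearPairs_add_le [ProperSpace E] [Nontrivial E] {K : ℕ}
    (hK : ∀ c : Fin n → E, IsPacking c → (nearPairs 2 c).card ≤ K) :
    ∃ ε > 0, ∀ c : Fin n → E, IsPacking c → (nearPairs (2 + ε) c).card ≤ K := by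
  obtain ⟨R, hR⟩ := exists_bounded_isPacking (E := E) n (zero_le_three)
  set S : Set (Fin n → E) := {c | IsPacking c} ∩ Set.univ.pi fun _ => closedBall 0 R
  have hS : IsCompact S :=
    (isCompact_univ_pi fun _ => isCompact_closedBall 0 R).inter_left isClosed_setOf_isPacking
  by_contra! hbad
  have hseq : ∀ m : ℕ, ∃ c ∈ S, K < (nearPairs (2 + 1 / ((m : ℝ) + 1)) c).card := by
    intro m
    have hε₁ : 1 / ((m : ℝ) + 1) ≤ 1 := div_le_one_of_le₀ (by linarith [m.cast_nonneg (α := ℝ)])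
      (by positivity)
    obtain ⟨c, hc, hKc⟩ := hbad (1 / ((m : ℝ) + 1)) (by positivity)
    obtain ⟨c', hc', hbound, hkeep⟩ := hR c hc
    refine ⟨c', ⟨hc', fun i _ => mem_closedBall_zero_iff.2 (hbound i)⟩,
      hKc.trans_le (card_le_card fun p hp => ?_)⟩
    obtain ⟨hlt, hle⟩ := mem_nearPairs.1 hp
    rw [mem_nearPairs, hkeep p.1 p.2 (by linarith)]
    exact ⟨hlt, hle⟩
  choose cs hcsS hcsK using hseq
  obtain ⟨ĉ, hĉS, φ, hφ, hlim⟩ := hS.tendsto_subseq hcsS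
  have hε : Tendsto (fun m => 1 / ((φ m : ℕ) + 1 : ℝ)) atTop (𝓝 0) :=
    tendsto_one_div_add_atTop_nhds_zero_nat.comp hφ.tendsto_atTop
  obtain ⟨m, hm⟩ := (eventually_nearPairs_add_subset hlim hε 2).exists
  exact (hcsK (φ m)).not_ge ((card_le_card hm).trans (hK ĉ hĉS.1))


theorem closedBall_inter_closedBall_subset_closedBall {a b p : E} (hp : p ∈ segment ℝ a b)
    (r : ℝ) : closedBall a r ∩ closedBall b r ⊆ closedBall p r := by
  rintro x ⟨ha, hb⟩
  rw [mem_closedBall_comm] at ha hb ⊢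
  exact (convex_closedBall x r).segment_subset ha hb hp

end NormedSpace

theorem measure_biUnion_add_sum_inter {α ι : Type*} [MeasurableSpace α] [LinearOrder ι]
    (μ : Measure α) {A : ι → Set α} (hA : ∀ i, MeasurableSet (A i))
    (h3 : ∀ i j k, i < j → j < k → A i ∩ A j ∩ A k = ∅) (s : Finset ι) :
    μ (⋃ i ∈ s, A i) + ∑ j ∈ s, ∑ i ∈ s with i < j, μ (A i ∩ A j) = ∑ i ∈ s, μ (A i) := by
  induction s using Finset.induction_on_max with
  | empty => simp
  | insert a s ha ih =>
    have has : a ∉ s := fun h => lt_irrefl a (ha a h)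
    -- without triple intersections, `A a` meets the earlier sets in pairwise disjoint pieces
    have hnew : ∑ i ∈ insert a s with i < a, μ (A i ∩ A a) = μ (A a ∩ ⋃ i ∈ s, A i) := by
      rw [filter_insert, if_neg (lt_irrefl a), filter_true_of_mem ha, Set.inter_iUnion₂,
        measure_biUnion_finset]
      · simp only [Set.inter_comm]
      · intro i hi j hj hij
        rcases hij.lt_or_gt with h | h
        · exact Set.disjoint_left.2 fun x hxi hxj =>
            (h3 i j a h (ha j hj)).subset ⟨⟨hxi.2, hxj.2⟩, hxi.1⟩
        · exact Set.disjoint_left.2 fun x hxi hxj =>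
            (h3 j i a h (ha i hi)).subset ⟨⟨hxj.2, hxi.2⟩, hxi.1⟩
      · exact fun i _ => (hA a).inter (hA i)
    have hold : ∀ j ∈ s, ∑ i ∈ insert a s with i < j, μ (A i ∩ A j) =
        ∑ i ∈ s with i < j, μ (A i ∩ A j) := by
      intro j hj
      rw [filter_insert, if_neg (ha j hj).asymm]
    rw [set_biUnion_insert, sum_insert has, sum_congr rfl hold, sum_insert has, ← ih, hnew,
      ← add_assoc, measure_union_add_inter' (hA a), add_assoc]

section InnerProduct

variable [NormedAddCommGroup E] [InnerProductSpace ℝ E]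

theorem closedBall_inter_closedBall_inter_closedBall_eq_empty {a b c : E} {r : ℝ}
    (hab : 2 ≤ dist a b) (hbc : 2 ≤ dist b c) (hac : 2 ≤ dist a c) (hr : 3 * r ^ 2 < 4) :
    closedBall a r ∩ closedBall b r ∩ closedBall c r = ∅ := by
  refine Set.eq_empty_of_forall_notMem fun x ⟨⟨ha, hb⟩, hc⟩ => ?_
  rw [mem_closedBall_comm, mem_closedBall, dist_eq_norm] at ha hb hc
  rw [dist_eq_norm] at hab hbc hac
  have hsum : ‖a - b‖ ^ 2 + ‖b - c‖ ^ 2 + ‖a - c‖ ^ 2 + ‖(a - x) + (b - x) + (c - x)‖ ^ 2 =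
      3 * (‖a - x‖ ^ 2 + ‖b - x‖ ^ 2 + ‖c - x‖ ^ 2) := by
    simp only [← real_inner_self_eq_norm_sq, inner_add_left, inner_add_right, inner_sub_left,
      inner_sub_right, real_inner_comm]
    ring
  linarith [pow_le_pow_left₀ zero_le_two hab 2, pow_le_pow_left₀ zero_le_two hbc 2,
    pow_le_pow_left₀ zero_le_two hac 2, pow_le_pow_left₀ (norm_nonneg _) ha 2,
    pow_le_pow_left₀ (norm_nonneg _) hb 2, pow_le_pow_left₀ (norm_nonneg _) hc 2,
    sq_nonneg ‖(a - x) + (b - x) + (c - x)‖]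

variable [FiniteDimensional ℝ E] [MeasurableSpace E] [BorelSpace E]

/-- The reflection exchanging `b - a` and `b' - a'`, followed by translations, is a
measure-preserving isometry carrying one pair of balls onto the other. -/
theorem volume_closedBall_inter_closedBall_congr {a b a' b' : E} (h : dist a b = dist a' b')
    (r : ℝ) :
    volume (closedBall a r ∩ closedBall b r) = volume (closedBall a' r ∩ closedBall b' r) := by
  set R := (ℝ ∙ ((b - a) - (b' - a')))ᗮ.reflection
  have hR : R (b - a) = b' - a' := by
    refine Submodule.reflection_sub ?_
    rwa [← dist_eq_norm', ← dist_eq_norm']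
  let f : E → E := fun x => a' + R (x - a)
  have hf : MeasurePreserving f volume volume :=
    (measurePreserving_add_left volume a').comp
      (R.measurePreserving.comp (measurePreserving_sub_right volume a))
  have hpre : f ⁻¹' (closedBall a' r ∩ closedBall b' r) = closedBall a r ∩ closedBall b r := by
    ext x
    have hb : a' + R (x - a) - b' = R (x - b) := by
      rw [show x - b = (x - a) - (b - a) by abel, map_sub R (x - a), hR]
      abel
    simp only [Set.mem_preimage, Set.mem_inter_iff, mem_closedBall, dist_eq_norm, f, hb,
      add_sub_cancel_left, R.norm_map]
  rw [← hpre, hf.measure_preimage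
    (measurableSet_closedBall.inter measurableSet_closedBall).nullMeasurableSet]

theorem volume_closedBall_inter_closedBall_le {a b a' b' : E} (h : dist a b ≤ dist a' b')
    (r : ℝ) :
    volume (closedBall a' r ∩ closedBall b' r) ≤ volume (closedBall a r ∩ closedBall b r) := by
  set θ := dist a b / dist a' b'
  have hθ : θ ∈ Set.Icc (0 : ℝ) 1 := ⟨by positivity, div_le_one_of_le₀ h dist_nonneg⟩
  set p := AffineMap.lineMap a' b' θ
  have hp : dist a' p = dist a b := by
    rw [dist_left_lineMap, Real.norm_of_nonneg hθ.1]
    rcases (dist_nonneg.trans h).eq_or_lt with h0 | h0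
    · rw [← h0, mul_zero]
      exact (le_antisymm (h0 ▸ h) dist_nonneg).symm
    · exact div_mul_cancel₀ _ h0.ne'
  calc volume (closedBall a' r ∩ closedBall b' r)
      ≤ volume (closedBall a' r ∩ closedBall p r) := measure_mono <| Set.subset_inter
        Set.inter_subset_left
        (closedBall_inter_closedBall_subset_closedBall (lineMap_mem_segment ℝ a' b' hθ) r)
    _ = volume (closedBall a r ∩ closedBall b r) := volume_closedBall_inter_closedBall_congr hp r

noncomputable def pairwiseOverlap (r : ℝ) (c : Fin n → E) : ℝ≥0∞ :=
  ∑ p : Fin n × Fin n with p.1 < p.2, volume (closedBall (c p.1) r ∩ closedBall (c p.2) r)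

theorem volume_iUnion_closedBall_add_pairwiseOverlap {c : Fin n → E} (hc : IsPacking c) {r : ℝ}
    (hr : 3 * r ^ 2 < 4) :
    volume (⋃ i, closedBall (c i) r) + pairwiseOverlap r c =
      n * volume (closedBall (0 : E) r) := by
  have h := measure_biUnion_add_sum_inter volume (fun i => measurableSet_closedBall)
    (fun i j k hij hjk => closedBall_inter_closedBall_inter_closedBall_eq_empty
      (hc.two_le_dist hij.ne) (hc.two_le_dist hjk.ne) (hc.two_le_dist (hij.trans hjk).ne) hr)
    (univ : Finset (Fin n))
  rw [pairwiseOverlap, sum_finset_product_right _ univ (fun j => {i | i < j}) (by simp)]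
  simpa [Measure.addHaar_closedBall_center] using h

theorem pairwiseOverlap_le_card_nearPairs_mul {c : Fin n → E} (hc : IsPacking c) {a b : E}
    (hab : dist a b = 2) {r t : ℝ} (hrt : 2 * r ≤ t) :
    pairwiseOverlap r c ≤ (nearPairs t c).card * volume (closedBall a r ∩ closedBall b r) := by
  rw [pairwiseOverlap, ← sum_subset (nearPairs_subset t c) fun p hp hfar => ?_]
  · calc ∑ p ∈ nearPairs t c, volume (closedBall (c p.1) r ∩ closedBall (c p.2) r)
        ≤ ∑ p ∈ nearPairs t c, volume (closedBall a r ∩ closedBall b r) :=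
          sum_le_sum fun p hp => volume_closedBall_inter_closedBall_le
            (hab ▸ hc.two_le_dist (mem_nearPairs.1 hp).1.ne) r
      _ = _ := by rw [sum_const, nsmul_eq_mul]
  · have hlt : p.1 < p.2 := (mem_filter.1 hp).2
    have hdist : r + r < dist (c p.1) (c p.2) := by
      rw [dist_eq_norm]
      linarith [not_le.1 fun h => hfar (mem_nearPairs.2 ⟨hlt, h⟩)]
    rw [(closedBall_disjoint_closedBall hdist).inter_eq, measure_empty]

theorem card_nearPairs_two_mul_le_pairwiseOverlap {a b : E} (hab : dist a b = 2) (r : ℝ)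
    (c : Fin n → E) :
    (nearPairs 2 c).card * volume (closedBall a r ∩ closedBall b r) ≤ pairwiseOverlap r c :=
  calc (nearPairs 2 c).card * volume (closedBall a r ∩ closedBall b r)
      = ∑ p ∈ nearPairs 2 c, volume (closedBall a r ∩ closedBall b r) := by
        rw [sum_const, nsmul_eq_mul]
    _ ≤ ∑ p ∈ nearPairs 2 c, volume (closedBall (c p.1) r ∩ closedBall (c p.2) r) :=
        sum_le_sum fun p hp => volume_closedBall_inter_closedBall_le
          (by rw [hab, dist_eq_norm]; exact (mem_nearPairs.1 hp).2) r
    _ ≤ pairwiseOverlap r c := sum_le_sum_of_subset (nearPairs_subset 2 c)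

theorem volume_iUnion_closedBall_le_of_pairwiseOverlap_le {c c' : Fin n → E} (hc : IsPacking c)
    (hc' : IsPacking c') {r : ℝ} (hr : 3 * r ^ 2 < 4)
    (h : pairwiseOverlap r c ≤ pairwiseOverlap r c') :
    volume (⋃ i, closedBall (c' i) r) ≤ volume (⋃ i, closedBall (c i) r) := by
  have hc_eq := volume_iUnion_closedBall_add_pairwiseOverlap hc hr
  have hc'_eq := volume_iUnion_closedBall_add_pairwiseOverlap hc' hr
  have hfin : pairwiseOverlap r c' ≠ ∞ :=
    (le_add_self.trans_lt (hc'_eq ▸ ENNReal.mul_lt_top (ENNReal.natCast_lt_top n)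
      measure_closedBall_lt_top)).ne
  refine ENNReal.le_of_add_le_add_right hfin ?_
  calc volume (⋃ i, closedBall (c' i) r) + pairwiseOverlap r c'
      = volume (⋃ i, closedBall (c i) r) + pairwiseOverlap r c := hc'_eq.trans hc_eq.symm
    _ ≤ volume (⋃ i, closedBall (c i) r) + pairwiseOverlap r c' := by gcongr

end InnerProduct

theorem contactNumber_eq_card_nearPairs {d n : ℕ} {c : Fin n → EuclideanSpace ℝ (Fin d)}
    (hc : IsPacking c) : contactNumber c = (nearPairs 2 c).card := by
  rw [contactNumber, ← Set.ncard_coe_finset]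
  congr 1
  ext p
  simp only [Set.mem_ofPred_eq, mem_coe, mem_nearPairs]
  exact and_congr_right fun hlt => ⟨le_of_eq, fun h => le_antisymm h (hc _ _ hlt.ne)⟩

end UnitBallPacking

open UnitBallPacking in
theorem exists_max_contact_packing_min_parallel_volume_general (d n : ℕ) (hd : 1 < d) :
    ∃ (lam0 : ℝ) (chat : Fin n → EuclideanSpace ℝ (Fin d)),
      0 < lam0 ∧
      (∀ j k : Fin n, j ≠ k → 2 ≤ ‖chat j - chat k‖) ∧
      (∀ c : Fin n → EuclideanSpace ℝ (Fin d),
        (∀ j k : Fin n, j ≠ k → 2 ≤ ‖c j - c k‖) →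
        contactNumber c ≤ contactNumber chat) ∧
      (∀ lam : ℝ, 0 < lam → lam < lam0 →
        ∀ c : Fin n → EuclideanSpace ℝ (Fin d),
          (∀ j k : Fin n, j ≠ k → 2 ≤ ‖c j - c k‖) →
          volume (⋃ i : Fin n, closedBall (chat i) (1 + lam)) ≤
            volume (⋃ i : Fin n, closedBall (c i) (1 + lam))) := by
  have : Nonempty (Fin d) := ⟨⟨0, by omega⟩⟩
  obtain ⟨ĉ, hĉ, hmax⟩ :=
    exists_isPacking_forall_card_nearPairs_le (E := EuclideanSpace ℝ (Fin d)) n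
  obtain ⟨ε, hε, hnear⟩ := exists_pos_forall_card_nearPairs_add_le hmax
  obtain ⟨v, hv⟩ := exists_norm_eq (EuclideanSpace ℝ (Fin d)) zero_le_two
  have hv0 : dist v 0 = 2 := by rw [dist_zero_right, hv]
  refine ⟨min (ε / 2) (1 / 8), ĉ, by positivity, hĉ, fun c hc => ?_, fun lam hlam hlt c hc => ?_⟩
  · rw [contactNumber_eq_card_nearPairs hc, contactNumber_eq_card_nearPairs hĉ]
    exact hmax c hc
  have hr : 3 * (1 + lam) ^ 2 < 4 := by nlinarith [min_le_right (ε / 2) (1 / 8)]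
  have h2r : 2 * (1 + lam) ≤ 2 + ε := by linarith [min_le_left (ε / 2) (1 / 8)]
  refine volume_iUnion_closedBall_le_of_pairwiseOverlap_le hc hĉ hr ?_
  calc pairwiseOverlap (1 + lam) c
      ≤ (nearPairs (2 + ε) c).card * volume (closedBall v (1 + lam) ∩ closedBall 0 (1 + lam)) :=
        pairwiseOverlap_le_card_nearPairs_mul hc hv0 h2r
    _ ≤ (nearPairs 2 ĉ).card * volume (closedBall v (1 + lam) ∩ closedBall 0 (1 + lam)) := by
        gcongr ?_ * _
        exact_mod_cast hnear c hc
    _ ≤ pairwiseOverlap (1 + lam) ĉ := card_nearPairs_two_mul_le_pairwiseOverlap hv0 _ ĉ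

/-- For `n > 1`, `d > 1`, there exist `λ_{d,n} > 0` and a packing `ĉ` of `n` unit balls in `E^d`
possessing the largest contact number, such that for all `0 < λ < λ_{d,n}` the outer parallel
domain of `ĉ` of outer radius `λ` has the smallest volume among all packings of `n` unit balls. -/
theorem exists_max_contact_packing_min_parallel_volume (d n : ℕ) (hd : 1 < d) (hn : 1 < n) :
    ∃ (lam0 : ℝ) (chat : Fin n → EuclideanSpace ℝ (Fin d)),
      0 < lam0 ∧
      (∀ j k : Fin n, j ≠ k → 2 ≤ ‖chat j - chat k‖) ∧
      (∀ c : Fin n → EuclideanSpace ℝ (Fin d),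
        (∀ j k : Fin n, j ≠ k → 2 ≤ ‖c j - c k‖) →
        contactNumber c ≤ contactNumber chat) ∧
      (∀ lam : ℝ, 0 < lam → lam < lam0 →
        ∀ c : Fin n → EuclideanSpace ℝ (Fin d),
          (∀ j k : Fin n, j ≠ k → 2 ≤ ‖c j - c k‖) →
          volume (⋃ i : Fin n, closedBall (chat i) (1 + lam)) ≤
            volume (⋃ i : Fin n, closedBall (c i) (1 + lam))) :=
  exists_max_contact_packing_min_parallel_volume_general d n hd
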